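/- (Lemma 3.2 (ii).) Suppose that for every K > 0 the function x ↦ inf_{s∈[0,K]} h(x,s) is nonnegative on D and not identically zero. Then for every a > λ₁ there exists M > 0 such that for all c > M the equation Ψ(−Δ)u = au − f(x,u) − c h(x,u) in D, u = 0 in D^c, has no nonzero nonnegative bounded continuous viscosity solution. -/

import Mathlib

/-!
Once `c` is large, harvesting outweighs growth everywhere a solution could live. At a global
maximum of `u` the subsolution inequality, tested against `u(x₀) + ε β_{x₀}` with a Gaussian
bump `β`, gives `a u − f(x,u) − c h(x,u) ≥ 0`; by superlinearity of `f` this bounds `u` by a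
constant `K` independent of `c`. Near a point `x₁` where `h(x₁, ·) ≥ δ > 0` on `[0, K]`, the
function `u − C β_{x₁}` (with `C` so large that it is negative off a small ball around `x₁`)
attains its maximum at some `x_b` close to `x₁`. Touching `u` there from above gives
`−6 C ∫ min(|y|², 1) j ≤ a u − f(x_b,u) − c h(x_b,u) ≤ |a| K − c δ / 2`, impossible for large `c`.
-/

open MeasureTheory Real Set Metric Filter Bornology

noncomputable section

/-- Euclidean space ℝ^d. -/
abbrev Rd (d : ℕ) : Type := EuclideanSpace ℝ (Fin d)

/-- Gaussian heat kernel (of Brownian motion running twice as fast). -/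
def heatKer (d : ℕ) (t r : ℝ) : ℝ := (4 * π * t) ^ (-(d : ℝ) / 2) * Real.exp (-(r ^ 2 / (4 * t)))

/-- The radial Lévy density of the subordinate Brownian motion. -/
def levyDensity (d : ℕ) (m : Measure ℝ) (r : ℝ) : ℝ :=
  ∫ t in Ioi (0 : ℝ), heatKer d t r ∂m

/-- The Bernstein function (Laplace exponent) associated with the Lévy measure `m`. -/
def bernsteinOf (m : Measure ℝ) (s : ℝ) : ℝ :=
  ∫ t in Ioi (0 : ℝ), (1 - Real.exp (-(s * t))) ∂m

/-- The nonlocal operator `Ψ(−Δ)` with radial jump kernel `J`. -/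
def psiDel (d : ℕ) (J : ℝ → ℝ) (g : Rd d → ℝ) (x : Rd d) : ℝ :=
  -(1 / 2) * ∫ y : Rd d, (g (x + y) + g (x - y) - 2 * g x) * J ‖y‖

/-- Boundedness of a real-valued function. -/
def Bdd {α : Type*} (g : α → ℝ) : Prop := ∃ C, ∀ x, |g x| ≤ C

/-- `ξ` is `C²` in a neighbourhood of `x`. -/
def C2Near (d : ℕ) (ξ : Rd d → ℝ) (x : Rd d) : Prop :=
  ∃ ε > 0, ContDiffOn ℝ 2 ξ (Metric.ball x ε)

/-- Viscosity subsolution of `Ψ(−Δ)u = g` in `D`. -/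
def IsViscSubsol (d : ℕ) (J : ℝ → ℝ) (D : Set (Rd d)) (g : Rd d → ℝ) (u : Rd d → ℝ) : Prop :=
  ∀ x ∈ D, ∀ ξ : Rd d → ℝ, Bdd ξ → Continuous ξ → C2Near d ξ x →
    ξ x = u x → (∀ y, y ≠ x → u y < ξ y) → psiDel d J ξ x ≤ g x

/-- Viscosity supersolution of `Ψ(−Δ)u = g` in `D`. -/
def IsViscSupersol (d : ℕ) (J : ℝ → ℝ) (D : Set (Rd d)) (g : Rd d → ℝ) (u : Rd d → ℝ) : Prop :=
  ∀ x ∈ D, ∀ ξ : Rd d → ℝ, Bdd ξ → Continuous ξ → C2Near d ξ x →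
    ξ x = u x → (∀ y, y ≠ x → ξ y < u y) → g x ≤ psiDel d J ξ x

/-- Viscosity solution of `Ψ(−Δ)u = g` in `D`. -/
def IsViscSol (d : ℕ) (J : ℝ → ℝ) (D : Set (Rd d)) (g u : Rd d → ℝ) : Prop :=
  IsViscSubsol d J D g u ∧ IsViscSupersol d J D g u

/-- The generalized (Berestycki–Nirenberg–Varadhan type) principal eigenvalue of
`−Ψ(−Δ) + c` in `D`. -/
def principalEV (d : ℕ) (J : ℝ → ℝ) (D : Set (Rd d)) (c : Rd d → ℝ) : ℝ :=
  sSup {l : ℝ | ∃ ψ : Rd d → ℝ, Bdd ψ ∧ Continuous ψ ∧ (∀ x, 0 ≤ ψ x) ∧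
    (∀ x ∈ D, 0 < ψ x) ∧ IsViscSupersol d J D (fun x => (c x + l) * ψ x) ψ}

/-- The Dirichlet principal eigenvalue `λ₁`. -/
def lambda1 (d : ℕ) (J : ℝ → ℝ) (D : Set (Rd d)) : ℝ :=
  principalEV d J D (fun _ => 0)

/-- Uniform interior and exterior ball condition (C^{1,1} boundary). -/
def UniformBallCondition (d : ℕ) (D : Set (Rd d)) : Prop :=
  ∃ r > 0, ∀ x ∈ frontier D,
    (∃ z : Rd d, dist x z = r ∧ Metric.ball z r ⊆ D) ∧
    (∃ z : Rd d, dist x z = r ∧ Metric.ball z r ⊆ (closure D)ᶜ)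

/-- A (positive) solution of the logistic equation `Ψ(−Δ)u = au − f(x,u)` in `D`,
vanishing outside `D`. -/
def IsLogisticSol (d : ℕ) (J : ℝ → ℝ) (D : Set (Rd d)) (f : Rd d → ℝ → ℝ) (a : ℝ)
    (u : Rd d → ℝ) : Prop :=
  Bdd u ∧ Continuous u ∧
    IsViscSol d J D (fun x => a * u x - f x (u x)) u ∧
    (∀ x ∈ D, 0 < u x) ∧ (∀ x ∈ Dᶜ, u x = 0)

/-- A (positive) solution of the harvesting problem
`Ψ(−Δ)u = au − f(x,u) − c h(x,u)` in `D`, vanishing outside `D`. -/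
def IsHarvestSol (d : ℕ) (J : ℝ → ℝ) (D : Set (Rd d)) (f h : Rd d → ℝ → ℝ) (a c : ℝ)
    (u : Rd d → ℝ) : Prop :=
  Bdd u ∧ Continuous u ∧
    IsViscSol d J D (fun x => a * u x - f x (u x) - c * h x (u x)) u ∧
    (∀ x ∈ D, 0 < u x) ∧ (∀ x ∈ Dᶜ, u x = 0)


lemma abs_add_add_sub_two_mul_le_of_lipschitz_deriv {φ φ' : ℝ → ℝ} {L : ℝ}
    (hφ : ∀ t, HasDerivAt φ (φ' t) t) (hL : ∀ s t, |φ' s - φ' t| ≤ L * |s - t|) (x h : ℝ) :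
    |φ (x + h) + φ (x - h) - 2 * φ x| ≤ 2 * L * h ^ 2 := by
  have hL0 : 0 ≤ L := by simpa using (abs_nonneg _).trans (hL 1 0)
  set F : ℝ → ℝ := fun t => φ (x + t * h) + φ (x - t * h)
  have hF : ∀ t, HasDerivAt F (φ' (x + t * h) * h - φ' (x - t * h) * h) t := fun t => by
    have hadd := (hφ _).comp t (((hasDerivAt_id t).mul_const h).const_add x)
    have hsub := (hφ _).comp t (((hasDerivAt_id t).mul_const h).const_sub x)
    exact (hadd.add hsub).congr_deriv (by simp only [id]; ring)
  have hF' : ∀ t ∈ Icc (0 : ℝ) 1,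
      ‖φ' (x + t * h) * h - φ' (x - t * h) * h‖ ≤ 2 * L * h ^ 2 := fun t ⟨ht0, ht1⟩ => by
    rw [Real.norm_eq_abs, ← sub_mul, abs_mul]
    calc |φ' (x + t * h) - φ' (x - t * h)| * |h| ≤ L * (2 * t * |h|) * |h| := by
          gcongr
          calc _ ≤ L * |x + t * h - (x - t * h)| := hL _ _
            _ = L * (2 * t * |h|) := by
              rw [show x + t * h - (x - t * h) = (2 * t) * h by ring, abs_mul,
                abs_of_nonneg (by positivity)]
      _ = 2 * L * t * h ^ 2 := by rw [← sq_abs h]; ring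
      _ ≤ 2 * L * h ^ 2 := mul_le_of_le_one_right (by positivity) ht1 |>.trans_eq' (by ring)
  have key := Convex.norm_image_sub_le_of_norm_hasDerivWithin_le
    (fun t _ => (hF t).hasDerivWithinAt) hF' (convex_Icc 0 1)
    (left_mem_Icc.mpr zero_le_one) (right_mem_Icc.mpr zero_le_one)
  simpa [F, two_mul, sub_sub, Real.norm_eq_abs] using key

lemma abs_deriv_exp_neg_sq_sub_le (s t : ℝ) :
    |exp (-s ^ 2) * (-2 * s) - exp (-t ^ 2) * (-2 * t)| ≤ 6 * |s - t| := by
  have hderiv : ∀ u, HasDerivAt (fun u => exp (-u ^ 2) * (-2 * u))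
      (exp (-u ^ 2) * (4 * u ^ 2 - 2)) u := fun u =>
    (((hasDerivAt_pow 2 u).fun_neg.exp).fun_mul ((hasDerivAt_id' u).const_mul (-2))).congr_deriv
      (by push_cast; ring)
  have hbound : ∀ u ∈ univ, ‖exp (-u ^ 2) * (4 * u ^ 2 - 2)‖ ≤ 6 := fun u _ => by
    have hsq : u ^ 2 * exp (-u ^ 2) ≤ 1 := by
      rw [exp_neg, ← div_eq_mul_inv, div_le_one (exp_pos _)]
      linarith [add_one_le_exp (u ^ 2)]
    have hexp : exp (-u ^ 2) ≤ 1 := exp_le_one_iff.mpr (by nlinarith)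
    rw [Real.norm_eq_abs, abs_le]
    constructor <;> nlinarith [exp_pos (-u ^ 2), sq_nonneg u]
  simpa [Real.norm_eq_abs] using Convex.norm_image_sub_le_of_norm_hasDerivWithin_le
    (fun u _ => (hderiv u).hasDerivWithinAt) hbound convex_univ (mem_univ t) (mem_univ s)

lemma abs_exp_neg_sq_second_diff_le (x h : ℝ) :
    |exp (-(x + h) ^ 2) + exp (-(x - h) ^ 2) - 2 * exp (-x ^ 2)| ≤ 12 * h ^ 2 := by
  have hφ : ∀ t, HasDerivAt (fun u => exp (-u ^ 2)) (exp (-t ^ 2) * (-2 * t)) t := fun t => by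
    convert (hasDerivAt_pow 2 t).fun_neg.exp using 1; simp only [Nat.cast_ofNat]; ring
  have := abs_add_add_sub_two_mul_le_of_lipschitz_deriv hφ abs_deriv_exp_neg_sq_sub_le x h
  linarith

lemma exp_neg_add_add_exp_neg_sub (P Q : ℝ) :
    exp (-(P + Q)) + exp (-(P - Q)) = 2 * exp (-P) * cosh Q := by
  rw [cosh_eq, neg_add, neg_sub', exp_add, exp_sub, exp_neg Q]
  field_simp
  ring

section GaussBump

variable {E : Type*} [NormedAddCommGroup E]

def gaussBump (p y : E) : ℝ := 1 - exp (-‖y - p‖ ^ 2)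

@[simp] lemma gaussBump_self (p : E) : gaussBump p p = 0 := by simp [gaussBump]

lemma gaussBump_nonneg (p y : E) : 0 ≤ gaussBump p y :=
  sub_nonneg.mpr (exp_le_one_iff.mpr (by nlinarith))

lemma gaussBump_le_one (p y : E) : gaussBump p y ≤ 1 :=
  sub_le_self _ (exp_pos _).le

lemma gaussBump_pos {p y : E} (hy : y ≠ p) : 0 < gaussBump p y := by
  have : 0 < ‖y - p‖ := norm_pos_iff.mpr (sub_ne_zero.mpr hy)
  exact sub_pos.mpr (exp_lt_one_iff.mpr (by nlinarith))

lemma one_sub_exp_neg_sq_le_gaussBump {p y : E} {ρ : ℝ} (hρ : 0 ≤ ρ) (hy : ρ ≤ dist y p) :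
    1 - exp (-ρ ^ 2) ≤ gaussBump p y := by
  rw [dist_eq_norm] at hy
  unfold gaussBump
  gcongr

lemma bdd_const_add_gaussBump (b A B : ℝ) (p q : E) :
    Bdd fun y => b + A * gaussBump p y + B * gaussBump q y := ⟨|b| + |A| + |B|, fun y => by
  have := gaussBump_nonneg p y; have := gaussBump_le_one p y
  have := gaussBump_nonneg q y; have := gaussBump_le_one q y
  rw [abs_le]
  constructor <;> nlinarith [neg_abs_le b, le_abs_self b, neg_abs_le A, le_abs_self A,
    neg_abs_le B, le_abs_self B]⟩

variable [InnerProductSpace ℝ E]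

lemma contDiff_gaussBump {n : WithTop ℕ∞} (p : E) : ContDiff ℝ n (gaussBump p) :=
  contDiff_const.sub (((contDiff_norm_sq ℝ).comp (contDiff_id.sub contDiff_const)).neg.exp)

lemma exp_neg_norm_add_sq_add_exp_neg_norm_sub_sq (v y : E) :
    exp (-‖v + y‖ ^ 2) + exp (-‖v - y‖ ^ 2) =
      2 * exp (-(‖v‖ ^ 2 + ‖y‖ ^ 2)) * cosh (2 * inner ℝ v y) := by
  rw [← exp_neg_add_add_exp_neg_sub, norm_add_sq_real, norm_sub_sq_real]
  ring_nf

/-- By the cosh identity above, the worst direction is `y ∥ v`, which reduces to one variable. -/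
lemma exp_neg_norm_sq_second_diff_le (v y : E) :
    exp (-‖v + y‖ ^ 2) + exp (-‖v - y‖ ^ 2) - 2 * exp (-‖v‖ ^ 2) ≤ 12 * ‖y‖ ^ 2 := by
  have hinner : |2 * inner ℝ v y| ≤ |2 * (‖v‖ * ‖y‖)| := by
    rw [abs_mul, abs_mul 2, abs_two, abs_of_nonneg (by positivity : 0 ≤ ‖v‖ * ‖y‖)]
    gcongr
    exact abs_real_inner_le_norm v y
  calc exp (-‖v + y‖ ^ 2) + exp (-‖v - y‖ ^ 2) - 2 * exp (-‖v‖ ^ 2)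
      ≤ 2 * exp (-(‖v‖ ^ 2 + ‖y‖ ^ 2)) * cosh (2 * (‖v‖ * ‖y‖)) - 2 * exp (-‖v‖ ^ 2) := by
        rw [exp_neg_norm_add_sq_add_exp_neg_norm_sub_sq]
        gcongr
        exact cosh_le_cosh.mpr hinner
    _ = exp (-(‖v‖ + ‖y‖) ^ 2) + exp (-(‖v‖ - ‖y‖) ^ 2) - 2 * exp (-‖v‖ ^ 2) := by
        rw [← exp_neg_add_add_exp_neg_sub]; ring_nf
    _ ≤ 12 * ‖y‖ ^ 2 := (abs_le.mp (abs_exp_neg_sq_second_diff_le _ _)).2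

lemma neg_two_mul_le_exp_neg_norm_sq_second_diff (v y : E) :
    -(2 * ‖y‖ ^ 2) ≤ exp (-‖v + y‖ ^ 2) + exp (-‖v - y‖ ^ 2) - 2 * exp (-‖v‖ ^ 2) := by
  have hv : exp (-‖v‖ ^ 2) ≤ 1 := exp_le_one_iff.mpr (by nlinarith)
  have hy : 1 - ‖y‖ ^ 2 ≤ exp (-‖y‖ ^ 2) := by linarith [add_one_le_exp (-‖y‖ ^ 2)]
  have hcosh : exp (-‖y‖ ^ 2) ≤ exp (-‖y‖ ^ 2) * cosh (2 * inner ℝ v y) :=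
    le_mul_of_one_le_right (exp_pos _).le (one_le_cosh _)
  rw [exp_neg_norm_add_sq_add_exp_neg_norm_sub_sq, neg_add, exp_add]
  nlinarith [exp_pos (-‖v‖ ^ 2), sq_nonneg ‖y‖]

lemma abs_gaussBump_second_diff_le (p x y : E) :
    |gaussBump p (x + y) + gaussBump p (x - y) - 2 * gaussBump p x| ≤ 12 * min (‖y‖ ^ 2) 1 := by
  have hrw : gaussBump p (x + y) + gaussBump p (x - y) - 2 * gaussBump p x =
      -(exp (-‖(x - p) + y‖ ^ 2) + exp (-‖(x - p) - y‖ ^ 2) - 2 * exp (-‖x - p‖ ^ 2)) := by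
    rw [gaussBump, gaussBump, gaussBump, show x + y - p = x - p + y by abel,
      show x - y - p = x - p - y by abel]
    ring
  have hexp : ∀ z : E, 0 < exp (-‖z‖ ^ 2) ∧ exp (-‖z‖ ^ 2) ≤ 1 :=
    fun z => ⟨exp_pos _, exp_le_one_iff.mpr (by nlinarith)⟩
  have hupper := exp_neg_norm_sq_second_diff_le (x - p) y
  have hlower := neg_two_mul_le_exp_neg_norm_sq_second_diff (x - p) y
  obtain ⟨h₁, h₁'⟩ := hexp (x - p + y)
  obtain ⟨h₂, h₂'⟩ := hexp (x - p - y)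
  obtain ⟨h₃, h₃'⟩ := hexp (x - p)
  rw [hrw, abs_neg, mul_min_of_nonneg _ _ (by norm_num : (0 : ℝ) ≤ 12), abs_le]
  constructor <;> rcases min_choice (12 * ‖y‖ ^ 2) (12 * 1) with h | h <;> rw [h] <;>
    nlinarith [sq_nonneg ‖y‖]

/-- With `C = (K + 1) / (1 - exp (-ρ ^ 2))`, `u - C β_p` is `≤ -1` off `ball p ρ` and `≥ 0` at `p`. -/
lemma exists_mem_ball_forall_sub_gaussBump_le [ProperSpace E] {u : E → ℝ} (hu : Continuous u)
    {K ρ : ℝ} {p : E} (huK : ∀ y, u y ≤ K) (hup : 0 ≤ u p) (hρ : 0 < ρ) :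
    ∃ x ∈ ball p ρ, ∀ y, u y - (K + 1) / (1 - exp (-ρ ^ 2)) * gaussBump p y ≤
      u x - (K + 1) / (1 - exp (-ρ ^ 2)) * gaussBump p x := by
  set C := (K + 1) / (1 - exp (-ρ ^ 2))
  set w : E → ℝ := fun y => u y - C * gaussBump p y
  have hexp : 0 < 1 - exp (-ρ ^ 2) := sub_pos.mpr (exp_lt_one_iff.mpr (by nlinarith))
  have hC : C * (1 - exp (-ρ ^ 2)) = K + 1 := div_mul_cancel₀ _ hexp.ne'
  have hC0 : 0 < C := div_pos (by linarith [huK p]) hexp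
  have hfar : ∀ y, ρ ≤ dist y p → w y < w p := fun y hy => by
    have := one_sub_exp_neg_sq_le_gaussBump hρ.le hy
    simp only [w, gaussBump_self]
    nlinarith [huK y]
  obtain ⟨x, -, hmax⟩ := (isCompact_closedBall p ρ).exists_isMaxOn (nonempty_closedBall.2 hρ.le)
    (hu.sub (continuous_const.mul (contDiff_gaussBump (n := 0) p).continuous)).continuousOn
  have hpx : w p ≤ w x := hmax (mem_closedBall_self hρ.le)
  refine ⟨x, mem_ball.mpr (not_le.mp fun h => (hfar x h).not_ge hpx), fun y => ?_⟩
  by_cases hy : y ∈ closedBall p ρ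
  · exact hmax hy
  · exact ((hfar y (not_le.mp hy).le).trans_le hpx).le

end GaussBump

lemma levyDensity_nonneg (d : ℕ) (m : Measure ℝ) (r : ℝ) : 0 ≤ levyDensity d m r :=
  setIntegral_nonneg measurableSet_Ioi fun t (ht : 0 < t) =>
    mul_nonneg (rpow_nonneg (by positivity) _) (exp_nonneg _)

section Viscosity

variable {d : ℕ} {J : ℝ → ℝ}

lemma abs_psiDel_le (hJ : ∀ r, 0 ≤ J r)
    (hjInt : Integrable fun y : Rd d => min (‖y‖ ^ 2) 1 * J ‖y‖) {ξ : Rd d → ℝ} {x : Rd d}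
    {L : ℝ} (hξ : ∀ y, |ξ (x + y) + ξ (x - y) - 2 * ξ x| ≤ L * min (‖y‖ ^ 2) 1) :
    |psiDel d J ξ x| ≤ L / 2 * ∫ y : Rd d, min (‖y‖ ^ 2) 1 * J ‖y‖ := by
  have hbound := norm_integral_le_of_norm_le (hjInt.const_mul L)
    (f := fun y : Rd d => (ξ (x + y) + ξ (x - y) - 2 * ξ x) * J ‖y‖)
    (Eventually.of_forall fun y => by
      rw [norm_mul, Real.norm_eq_abs, Real.norm_of_nonneg (hJ _), ← mul_assoc]
      exact mul_le_mul_of_nonneg_right (hξ y) (hJ _))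
  rw [integral_const_mul, Real.norm_eq_abs] at hbound
  rw [psiDel, abs_mul, abs_neg, abs_of_pos (by norm_num : (0 : ℝ) < 1 / 2)]
  linarith

lemma abs_psiDel_const_add_gaussBump_le (hJ : ∀ r, 0 ≤ J r)
    (hjInt : Integrable fun y : Rd d => min (‖y‖ ^ 2) 1 * J ‖y‖) (b A B : ℝ) (p q x : Rd d) :
    |psiDel d J (fun y => b + A * gaussBump p y + B * gaussBump q y) x| ≤
      6 * (|A| + |B|) * ∫ y : Rd d, min (‖y‖ ^ 2) 1 * J ‖y‖ := by
  refine (abs_psiDel_le hJ hjInt (L := 12 * (|A| + |B|)) fun y => ?_).trans_eq (by ring)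
  have hp := abs_gaussBump_second_diff_le p x y
  have hq := abs_gaussBump_second_diff_le q x y
  calc _ = |A * (gaussBump p (x + y) + gaussBump p (x - y) - 2 * gaussBump p x) +
          B * (gaussBump q (x + y) + gaussBump q (x - y) - 2 * gaussBump q x)| := by ring_nf
    _ ≤ |A| * (12 * min (‖y‖ ^ 2) 1) + |B| * (12 * min (‖y‖ ^ 2) 1) := by
        refine (abs_add_le _ _).trans ?_
        rw [abs_mul, abs_mul]
        gcongr
    _ = 12 * (|A| + |B|) * min (‖y‖ ^ 2) 1 := by ring

/-- The test function is `u x - A β_p(x) + A β_p + ε β_x`, with `β = gaussBump`; the `ε`-term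
makes the contact at `x` strict, and `ε → 0` at the end. -/
theorem IsViscSubsol.neg_le_of_forall_sub_gaussBump_le {D : Set (Rd d)} {g u : Rd d → ℝ}
    (hu : IsViscSubsol d J D g u) (hJ : ∀ r, 0 ≤ J r)
    (hjInt : Integrable fun y : Rd d => min (‖y‖ ^ 2) 1 * J ‖y‖) {x p : Rd d} (hx : x ∈ D)
    {A : ℝ} (hmax : ∀ y, u y - A * gaussBump p y ≤ u x - A * gaussBump p x) :
    -(6 * |A| * ∫ y : Rd d, min (‖y‖ ^ 2) 1 * J ‖y‖) ≤ g x := by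
  set I := ∫ y : Rd d, min (‖y‖ ^ 2) 1 * J ‖y‖
  have hI : 0 ≤ I := integral_nonneg fun y => mul_nonneg (by positivity) (hJ _)
  have hε : ∀ ε > 0, -(6 * (|A| + ε) * I) ≤ g x := by
    intro ε hε
    set b := u x - A * gaussBump p x
    set ξ : Rd d → ℝ := fun y => b + A * gaussBump p y + ε * gaussBump x y
    have hξ : ContDiff ℝ 2 ξ :=
      (contDiff_const.add (contDiff_const.mul (contDiff_gaussBump p))).add
        (contDiff_const.mul (contDiff_gaussBump x))
    have htouch : ∀ y, y ≠ x → u y < ξ y := fun y hy => by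
      have := hmax y
      have := gaussBump_pos hy
      simp only [ξ, b]
      nlinarith
    have hsub := hu x hx ξ (bdd_const_add_gaussBump b A ε p x) hξ.continuous
      ⟨1, one_pos, hξ.contDiffOn⟩ (by simp [ξ, b]) htouch
    have hpsi := abs_psiDel_const_add_gaussBump_le hJ hjInt b A ε p x x
    rw [abs_of_pos hε] at hpsi
    linarith [(abs_le.mp hpsi).1]
  refine le_of_forall_pos_le_add fun t ht => ?_
  have hεI : 6 * (t / (6 * I + 1)) * I ≤ t := by
    rw [mul_div_assoc', div_mul_eq_mul_div, div_le_iff₀ (by positivity)]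
    nlinarith
  have := hε (t / (6 * I + 1)) (by positivity)
  nlinarith

lemma IsViscSubsol.nonneg_of_forall_le {D : Set (Rd d)} {g u : Rd d → ℝ}
    (hu : IsViscSubsol d J D g u) (hJ : ∀ r, 0 ≤ J r)
    (hjInt : Integrable fun y : Rd d => min (‖y‖ ^ 2) 1 * J ‖y‖) {x : Rd d} (hx : x ∈ D)
    (hmax : ∀ y, u y ≤ u x) : 0 ≤ g x := by
  simpa using
    hu.neg_le_of_forall_sub_gaussBump_le hJ hjInt hx (p := x) (A := 0) (by simpa using hmax)

lemma exists_mem_forall_le_of_eq_zero_compl {X : Type*} [PseudoMetricSpace X] [ProperSpace X]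
    {D : Set X} (hD : IsBounded D) {u : X → ℝ} (hu : Continuous u) (hu0 : ∀ x ∈ Dᶜ, u x = 0)
    {y : X} (hy : 0 < u y) : ∃ x₀ ∈ D, ∀ z, u z ≤ u x₀ := by
  have hyD : y ∈ D := by_contra fun h => hy.ne' (hu0 y h)
  obtain ⟨x₀, -, hmax⟩ :=
    hD.isCompact_closure.exists_isMaxOn ⟨y, subset_closure hyD⟩ hu.continuousOn
  have hpos : 0 < u x₀ := hy.trans_le (hmax (subset_closure hyD))
  refine ⟨x₀, by_contra fun h => hpos.ne' (hu0 x₀ h), fun z => ?_⟩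
  by_cases hz : z ∈ D
  · exact hmax (subset_closure hz)
  · rw [hu0 z hz]; exact hpos.le

lemma IsViscSubsol.le_of_forall_lt_zero {D : Set (Rd d)} {g u : Rd d → ℝ}
    (hu : IsViscSubsol d J D g u) (hJ : ∀ r, 0 ≤ J r)
    (hjInt : Integrable fun y : Rd d => min (‖y‖ ^ 2) 1 * J ‖y‖) (hD : IsBounded D)
    (huc : Continuous u) (hu0 : ∀ x ∈ Dᶜ, u x = 0) {K : ℝ} (hK : 0 ≤ K)
    (hg : ∀ x ∈ D, K ≤ u x → g x < 0) (y : Rd d) : u y ≤ K := by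
  by_contra! hy
  obtain ⟨x₀, hx₀, hmax⟩ := exists_mem_forall_le_of_eq_zero_compl hD huc hu0 (hK.trans_lt hy)
  exact (hg x₀ hx₀ (hy.le.trans (hmax y))).not_ge (hu.nonneg_of_forall_le hJ hjInt hx₀ hmax)

end Viscosity

lemma exists_pos_forall_mul_lt_of_tendsto_iInf_div {ι : Type*} {F : ι → ℝ → ℝ}
    (hF0 : ∀ i s, 0 ≤ s → 0 ≤ F i s) (hF : Tendsto (fun s => ⨅ i, F i s / s) atTop atTop)
    (a : ℝ) : ∃ K > 0, ∀ i s, K ≤ s → a * s < F i s := by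
  obtain ⟨S, hS⟩ := eventually_atTop.mp (tendsto_atTop.mp hF (a + 1))
  refine ⟨max S 1, by positivity, fun i s hs => ?_⟩
  have hs0 : 0 < s := one_pos.trans_le ((le_max_right _ _).trans hs)
  have hbdd : BddBelow (range fun j => F j s / s) :=
    ⟨0, by rintro _ ⟨j, rfl⟩; exact div_nonneg (hF0 j s hs0.le) hs0.le⟩
  have hle := (hS s ((le_max_left _ _).trans hs)).trans (ciInf_le hbdd i)
  rw [le_div_iff₀ hs0] at hle
  linarith

lemma exists_ball_subset_forall_lt_of_continuousOn_prod {X Y : Type*} [PseudoMetricSpace X]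
    [PseudoMetricSpace Y] {S U : Set X} {T : Set Y} (hS : IsCompact S) (hU : IsOpen U)
    (hUS : U ⊆ S) (hT : IsCompact T) {F : X → Y → ℝ}
    (hF : ContinuousOn (fun q : X × Y => F q.1 q.2) (S ×ˢ T)) {x₁ : X} (hx₁ : x₁ ∈ U)
    {δ δ' : ℝ} (hδ : ∀ s ∈ T, δ ≤ F x₁ s) (hδ' : δ' < δ) :
    ∃ ρ > 0, ball x₁ ρ ⊆ U ∧ ∀ x ∈ ball x₁ ρ, ∀ s ∈ T, δ' < F x s := by
  obtain ⟨η, hη, hFη⟩ := Metric.uniformContinuousOn_iff.mp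
    ((hS.prod hT).uniformContinuousOn_of_continuous hF) (δ - δ') (sub_pos.mpr hδ')
  obtain ⟨η', hη', hball⟩ := Metric.isOpen_iff.mp hU x₁ hx₁
  refine ⟨min η η', lt_min hη hη', (ball_subset_ball (min_le_right _ _)).trans hball,
    fun x hx s hs => ?_⟩
  have hxU := hball (ball_subset_ball (min_le_right _ _) hx)
  have hxη : dist x x₁ < η := (mem_ball.mp hx).trans_le (min_le_left _ _)
  have := hFη (x, s) ⟨hUS hxU, hs⟩ (x₁, s) ⟨hUS hx₁, hs⟩ (by simpa [Prod.dist_eq] using hxη)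
  rw [Real.dist_eq, abs_lt] at this
  linarith [hδ s hs]

theorem harvesting_no_solution_large_c_general
    (d : ℕ)
    (m : Measure ℝ)
    (D : Set (Rd d)) (hDo : IsOpen D) (hDb : Bornology.IsBounded D)
    (hjInt : Integrable (fun y : Rd d => min (‖y‖ ^ 2) 1 * levyDensity d m ‖y‖))
    (f : Rd d → ℝ → ℝ)
    (hfPos : ∀ x ∈ closure D, ∀ s : ℝ, 0 ≤ s → 0 ≤ f x s)
    (hfL : Tendsto (fun s : ℝ => ⨅ x : D, f x.1 s / s) atTop atTop)
    (h : Rd d → ℝ → ℝ)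
    (hhC : ContinuousOn (fun p : Rd d × ℝ => h p.1 p.2) (closure D ×ˢ Ici 0))
    (hhPos : ∀ x ∈ closure D, ∀ s : ℝ, 0 ≤ s → 0 ≤ h x s)
    (hhInf : ∀ K > (0 : ℝ), (∀ x ∈ D, 0 ≤ sInf (h x '' Icc 0 K)) ∧
      ∃ x ∈ D, sInf (h x '' Icc 0 K) ≠ 0)
    (a : ℝ) :
    ∃ M > (0 : ℝ), ∀ c : ℝ, M < c →
      ¬ ∃ u : Rd d → ℝ, Bdd u ∧ Continuous u ∧ (∀ x, 0 ≤ u x) ∧ (∃ x, u x ≠ 0) ∧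
        IsViscSol d (levyDensity d m) D
          (fun x => a * u x - f x (u x) - c * h x (u x)) u ∧
        (∀ x ∈ Dᶜ, u x = 0) := by
  set I := ∫ y : Rd d, min (‖y‖ ^ 2) 1 * levyDensity d m ‖y‖
  have hJ := levyDensity_nonneg d m
  have hI : 0 ≤ I := integral_nonneg fun y => mul_nonneg (by positivity) (hJ _)
  obtain ⟨K, hK, hfK⟩ := exists_pos_forall_mul_lt_of_tendsto_iInf_div
    (fun x s hs => hfPos x.1 (subset_closure x.2) s hs) hfL a
  obtain ⟨hhK, x₁, hx₁, hδ⟩ := hhInf K hK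
  set δ := sInf (h x₁ '' Icc 0 K)
  have hδ0 : 0 < δ := (hhK x₁ hx₁).lt_of_ne' hδ
  have hδh : ∀ s ∈ Icc 0 K, δ ≤ h x₁ s := fun s hs =>
    csInf_le ⟨0, by rintro _ ⟨t, ht, rfl⟩; exact hhPos x₁ (subset_closure hx₁) t ht.1⟩
      (mem_image_of_mem _ hs)
  obtain ⟨ρ, hρ, hρD, hhρ⟩ := exists_ball_subset_forall_lt_of_continuousOn_prod
    hDb.isCompact_closure hDo subset_closure isCompact_Icc
    (hhC.mono (prod_mono subset_rfl Icc_subset_Ici_self)) hx₁ hδh (half_lt_self hδ0)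
  set C := (K + 1) / (1 - exp (-ρ ^ 2))
  refine ⟨2 * (|a| * K + 6 * |C| * I) / δ + 1, by positivity, fun c hc => ?_⟩
  rintro ⟨u, -, huc, hu0, -, ⟨hsub, -⟩, huD⟩
  have hc0 : 0 < c := lt_of_le_of_lt (by positivity) hc
  have huK : ∀ y, u y ≤ K := hsub.le_of_forall_lt_zero hJ hjInt hDb huc huD hK.le fun x hx hKu => by
    have := hfK ⟨x, hx⟩ (u x) hKu
    have := mul_nonneg hc0.le (hhPos x (subset_closure hx) (u x) (hu0 x))
    linarith
  obtain ⟨xb, hxb, hmax⟩ := exists_mem_ball_forall_sub_gaussBump_le huc huK (hu0 x₁) hρ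
  have hxbD : xb ∈ D := hρD hxb
  have hvisc := hsub.neg_le_of_forall_sub_gaussBump_le hJ hjInt hxbD hmax
  have hhxb := hhρ xb hxb (u xb) ⟨hu0 xb, huK xb⟩
  have hau : a * u xb ≤ |a| * K := mul_le_mul (le_abs_self a) (huK xb) (hu0 xb) (abs_nonneg a)
  have hfxb := hfPos xb (subset_closure hxbD) (u xb) (hu0 xb)
  have hcδ : c * δ < 2 * (|a| * K + 6 * |C| * I) := by nlinarith
  linarith [(lt_div_iff₀ hδ0).mpr hcδ]

/-- Lemma 3.2 (ii): for `a > λ₁` there is no nonzero nonnegative solution when `c` is large. -/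
theorem harvesting_no_solution_large_c
    (d : ℕ) (hd : 1 ≤ d)
    (m : Measure ℝ)
    (hm : ∫⁻ t in Ioi (0 : ℝ), ENNReal.ofReal (1 - Real.exp (-t)) ∂m ≠ ⊤)
    (D : Set (Rd d)) (hDo : IsOpen D) (hDb : Bornology.IsBounded D)
    (hDc : IsConnected D) (hDr : UniformBallCondition d D)
    (hjInt : Integrable (fun y : Rd d => min (‖y‖ ^ 2) 1 * levyDensity d m ‖y‖))
    (κ₁ κ₂ b₁ : ℝ) (hκ₁ : 0 < κ₁) (hκ₁₂ : κ₁ ≤ κ₂) (hκ₂ : κ₂ < 1) (hb₁ : 1 ≤ b₁)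
    (hA1 : ∀ r R : ℝ, 1 ≤ r → r ≤ R →
      b₁⁻¹ * (R / r) ^ κ₁ ≤ bernsteinOf m R / bernsteinOf m r ∧
        bernsteinOf m R / bernsteinOf m r ≤ b₁ * (R / r) ^ κ₂)
    (hA2 : ∃ b₂ > (1 : ℝ), ∀ r : ℝ, 1 ≤ r → levyDensity d m r ≤ b₂ * levyDensity d m (r + 1))
    (f f' : Rd d → ℝ → ℝ)
    (hfC : ContinuousOn (fun p : Rd d × ℝ => f p.1 p.2) (closure D ×ˢ Ici 0))
    (hfPos : ∀ x ∈ closure D, ∀ s : ℝ, 0 ≤ s → 0 ≤ f x s)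
    (hfD : ∀ x ∈ closure D, ∀ s : ℝ, 0 ≤ s → HasDerivWithinAt (f x) (f' x s) (Ici 0) s)
    (hf'C : ContinuousOn (fun p : Rd d × ℝ => f' p.1 p.2) (closure D ×ˢ Ici 0))
    (hf0 : ∀ x ∈ closure D, f x 0 = 0)
    (hf'0 : ∀ x ∈ closure D, f' x 0 = 0)
    (hfM : ∀ x ∈ D, StrictMonoOn (fun s => f x s / s) (Ioi 0))
    (hfL : Tendsto (fun s : ℝ => ⨅ x : D, f x.1 s / s) atTop atTop)
    (h h' : Rd d → ℝ → ℝ)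
    (hhC : ContinuousOn (fun p : Rd d × ℝ => h p.1 p.2) (closure D ×ˢ Ici 0))
    (hhPos : ∀ x ∈ closure D, ∀ s : ℝ, 0 ≤ s → 0 ≤ h x s)
    (hhD : ∀ x ∈ closure D, ∀ s : ℝ, 0 ≤ s → HasDerivWithinAt (h x) (h' x s) (Ici 0) s)
    (hh'C : ContinuousOn (fun p : Rd d × ℝ => h' p.1 p.2) (closure D ×ˢ Ici 0))
    (hhB : ∃ C, ∀ x ∈ closure D, ∀ s : ℝ, 0 ≤ s → h x s ≤ C)
    (hh0 : ∃ x ∈ closure D, 0 < h x 0)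
    (hhInf : ∀ K > (0 : ℝ), (∀ x ∈ D, 0 ≤ sInf (h x '' Icc 0 K)) ∧
      ∃ x ∈ D, sInf (h x '' Icc 0 K) ≠ 0)
    (a : ℝ) (ha : lambda1 d (levyDensity d m) D < a) :
    ∃ M > (0 : ℝ), ∀ c : ℝ, M < c →
      ¬ ∃ u : Rd d → ℝ, Bdd u ∧ Continuous u ∧ (∀ x, 0 ≤ u x) ∧ (∃ x, u x ≠ 0) ∧
        IsViscSol d (levyDensity d m) D
          (fun x => a * u x - f x (u x) - c * h x (u x)) u ∧
        (∀ x ∈ Dᶜ, u x = 0) :=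
  harvesting_no_solution_large_c_general d m D hDo hDb hjInt f hfPos hfL h hhC hhPos hhInf a
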